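/- arXiv:1412.6911 — 3 statements merged into one kernel-verified Lean document; each statement's English description precedes it below -/
import Mathlib

section
/- Let n1, ..., np be positive integers with d = gcd(n1, ..., np). Then there exist integers N2, ..., Np such that the set { k1*n1 + k2*n2 + ... + kp*np : k1 ∈ ℤ≥0, ki ∈ {0,...,Ni} for i ≥ 2 } contains all sufficiently large multiples of d. -/
theorem bezout_finset {ι : Type*} [DecidableEq ι] (s : Finset ι) (f : ι → ℕ) :
    ∃ c : ι → ℤ, ∑ i ∈ s, c i * f i = s.gcd f := by
  induction s using Finset.induction_on with
  | empty => exact ⟨0, by simp⟩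
  | @insert a s ha ih =>
    obtain ⟨c, hc⟩ := ih
    refine ⟨fun i => if i = a then Nat.gcdA (f a) (s.gcd f)
      else Nat.gcdB (f a) (s.gcd f) * c i, ?_⟩
    rw [Finset.sum_insert ha, Finset.gcd_insert]
    have h1 : ∑ i ∈ s, (if i = a then Nat.gcdA (f a) (s.gcd f)
        else Nat.gcdB (f a) (s.gcd f) * c i) * (f i : ℤ)
        = Nat.gcdB (f a) (s.gcd f) * ∑ i ∈ s, c i * f i := by
      rw [Finset.mul_sum]
      refine Finset.sum_congr rfl fun i hi => ?_
      rw [if_neg (by rintro rfl; exact ha hi), mul_assoc]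
    rw [h1, hc]
    have h2 : gcd (f a) (s.gcd f) = Nat.gcd (f a) (s.gcd f) := rfl
    rw [h2, Nat.gcd_eq_gcd_ab]
    simp only [if_pos rfl, if_true]
    ring

theorem frobenius_variant (p : ℕ) (hp : 0 < p) (n : Fin p → ℕ) (hn : ∀ i, 0 < n i) :
    ∃ N : Fin p → ℕ, ∃ M : ℕ, ∀ m : ℕ, M ≤ m → (Finset.univ.gcd n) ∣ m →
      ∃ k : Fin p → ℕ, (∀ i : Fin p, i ≠ ⟨0, hp⟩ → k i ≤ N i) ∧ ∑ i, k i * n i = m := by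
  set i0 : Fin p := ⟨0, hp⟩
  set n0 : ℕ := n i0 with hn0
  have hn0pos : 0 < n0 := hn i0
  obtain ⟨c, hc⟩ := bezout_finset (Finset.univ : Finset (Fin p)) n
  refine ⟨fun _ => n0, n0 * ∑ i, n i, fun m hM hdm => ?_⟩
  obtain ⟨q, hq⟩ := hdm
  have hmc : (m : ℤ) = ∑ i, (q * c i) * n i := by
    calc (m : ℤ) = ((Finset.univ.gcd n : ℕ) : ℤ) * (q : ℕ) := by exact_mod_cast hq
    _ = (q : ℤ) * ∑ i, c i * n i := by rw [hc]; ring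
    _ = ∑ i, (q * c i) * n i := by rw [Finset.mul_sum]; exact Finset.sum_congr rfl fun i _ => by ring
  set k' : Fin p → ℕ := fun i => if i = i0 then 0 else ((q * c i % n0 : ℤ)).toNat with hk'
  have hk'le : ∀ i, k' i ≤ n0 := by
    intro i
    simp only [hk']
    split
    · exact Nat.zero_le _
    · exact Int.toNat_le.mpr (le_of_lt (Int.emod_lt_of_pos _ (by exact_mod_cast hn0pos)))
  set S : ℕ := ∑ i, k' i * n i with hS
  have hterm : ∀ i : Fin p, ((k' i : ZMod n0)) * (n i : ZMod n0)
      = ((q * c i : ℤ) : ZMod n0) * (n i : ZMod n0) := by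
    intro i
    by_cases h : i = i0
    · subst h
      have : ((n i0 : ℕ) : ZMod n0) = 0 := by
        rw [← hn0]; exact ZMod.natCast_self n0
      rw [this, mul_zero, mul_zero]
    · have h1 : k' i = ((q * c i % n0 : ℤ)).toNat := by simp only [hk', if_neg h]
      have h2 : ((k' i : ℕ) : ZMod n0) = (((k' i : ℕ) : ℤ) : ZMod n0) := by push_cast; rfl
      rw [h2, h1, Int.toNat_of_nonneg (Int.emod_nonneg _ (by exact_mod_cast hn0pos.ne'))]
      congr 1
      rw [ZMod.intCast_eq_intCast_iff]
      exact Int.emod_emod_of_dvd _ dvd_rfl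
  have key : (S : ZMod n0) = (m : ZMod n0) := by
    have hmz : ((m : ℤ) : ZMod n0) = (m : ZMod n0) := by push_cast; rfl
    calc (S : ZMod n0) = ∑ i, ((k' i : ZMod n0)) * (n i : ZMod n0) := by
          rw [hS]; push_cast; rfl
    _ = ∑ i, ((q * c i : ℤ) : ZMod n0) * (n i : ZMod n0) :=
          Finset.sum_congr rfl fun i _ => hterm i
    _ = ((m : ℤ) : ZMod n0) := by rw [hmc]; push_cast; rfl
    _ = (m : ZMod n0) := hmz
  have hcong : S ≡ m [MOD n0] := (ZMod.natCast_eq_natCast_iff _ _ _).mp key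
  have hSle : S ≤ m := by
    calc S ≤ ∑ i, n0 * n i :=
          Finset.sum_le_sum fun i _ => Nat.mul_le_mul_right _ (hk'le i)
    _ = n0 * ∑ i, n i := (Finset.mul_sum _ _ _).symm
    _ ≤ m := hM
  have hdvd : n0 ∣ m - S := (Nat.modEq_iff_dvd' hSle).mp hcong
  refine ⟨fun i => if i = i0 then (m - S) / n0 else k' i, fun i hi => ?_, ?_⟩
  · simp only [if_neg hi]; exact hk'le i
  · rw [← Finset.sum_erase_add Finset.univ _ (Finset.mem_univ i0)]
    simp only [if_pos rfl, if_true]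
    have he : ∑ i ∈ Finset.univ.erase i0, (if i = i0 then (m - S) / n0 else k' i) * n i
        = ∑ i ∈ Finset.univ.erase i0, k' i * n i :=
      Finset.sum_congr rfl fun i hi => by rw [if_neg (Finset.ne_of_mem_erase hi)]
    have heS : ∑ i ∈ Finset.univ.erase i0, k' i * n i = S := by
      rw [hS, ← Finset.sum_erase_add Finset.univ _ (Finset.mem_univ i0)]
      have hz : k' i0 = 0 := by simp [hk']
      rw [hz]
      simp
    have hdm2 : (m - S) / n0 * n i0 = m - S := by rw [← hn0]; exact Nat.div_mul_cancel hdvd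
    rw [he, heS, hdm2]
    omega
end

section
/- Let a > 1 and let X and Y be independent nonnegative-integer-valued random variables such that n^a * P(X = n) → C_X and n^a * P(Y = n) → C_Y as n → ∞, for positive constants C_X, C_Y. Then n^a * P(X + Y = n) → C_X + C_Y as n → ∞. -/
open MeasureTheory ProbabilityTheory Filter

private lemma aux_tendsto (a : ℝ) (ha : 0 < a) (p q : ℕ → ℝ) (hp0 : ∀ k, 0 ≤ p k)
    (hps : Summable p) (C : ℝ)
    (hq : Tendsto (fun n : ℕ => (n : ℝ) ^ a * q n) atTop (nhds C))
    (m : ℕ → ℕ) (hm1 : ∀ n k, k < m n → 2 * k ≤ n) (hm2 : Tendsto m atTop atTop) :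
    Tendsto (fun n : ℕ => ∑ k ∈ Finset.range (m n), p k * ((n : ℝ) ^ a * q (n - k)))
      atTop (nhds (C * ∑' k, p k)) := by
  -- bound on the sequence n^a * q n
  obtain ⟨M, hM⟩ : ∃ M, ∀ n : ℕ, |(n : ℝ) ^ a * q n| ≤ M := by
    obtain ⟨M, hM⟩ := hq.abs.bddAbove_range
    exact ⟨M, fun n => hM (Set.mem_range_self n)⟩
  have hM0 : 0 ≤ M := le_trans (abs_nonneg _) (hM 0)
  set F : ℕ → ℕ → ℝ := fun n k => if k < m n then p k * ((n : ℝ) ^ a * q (n - k)) else 0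
  have hFs : ∀ n, (∑' k, F n k) = ∑ k ∈ Finset.range (m n), p k * ((n : ℝ) ^ a * q (n - k)) := by
    intro n
    rw [tsum_eq_sum (s := Finset.range (m n))
      (fun k hk => by
        have : ¬ k < m n := fun h => hk (Finset.mem_range.mpr h)
        simp only [F]
        rw [if_neg this])]
    exact Finset.sum_congr rfl fun k hk => by simp [F, if_pos (Finset.mem_range.mp hk)]
  have key : Tendsto (fun n => ∑' k, F n k) atTop (nhds (∑' k, p k * C)) := by
    apply tendsto_tsum_of_dominated_convergence (bound := fun k => p k * (2 ^ a * M))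
      (hps.mul_right _)
    · intro k
      have h1 : Tendsto (fun n : ℕ => ((n - k : ℕ) : ℝ) ^ a * q (n - k)) atTop (nhds C) :=
        hq.comp (tendsto_sub_atTop_nat k)
      have hr : Tendsto (fun n : ℕ => (n : ℝ) / ((n : ℝ) - k)) atTop (nhds 1) := by
        have h3 : Tendsto (fun n : ℕ => 1 - (k : ℝ) / n) atTop (nhds 1) := by
          simpa using tendsto_const_nhds.sub (tendsto_const_div_atTop_nhds_zero_nat (k : ℝ))
        have h4 := h3.inv₀ one_ne_zero
        rw [inv_one] at h4
        apply h4.congr'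
        filter_upwards [eventually_ge_atTop (k + 1)] with n hn
        have hn0 : (0 : ℝ) < n := by exact_mod_cast Nat.pos_of_ne_zero (by omega)
        have hnk : (0 : ℝ) < (n : ℝ) - k := by
          have : (k : ℝ) < n := by exact_mod_cast hn
          linarith
        field_simp
      have h2 : Tendsto (fun n : ℕ => ((n : ℝ) / ((n : ℝ) - k)) ^ a) atTop (nhds 1) := by
        have hc : Tendsto (fun x : ℝ => x ^ a) (nhds 1) (nhds 1) := by
          have := (Real.continuousAt_rpow_const 1 a (Or.inl one_ne_zero)).tendsto
          rwa [Real.one_rpow] at this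
        exact hc.comp hr
      have h5 : Tendsto (fun n : ℕ => (n : ℝ) ^ a * q (n - k)) atTop (nhds C) := by
        have := h1.mul h2
        rw [mul_one] at this
        apply this.congr'
        filter_upwards [eventually_ge_atTop (k + 1)] with n hn
        have hkn : k ≤ n := by omega
        have hn0 : (0 : ℝ) ≤ n := by positivity
        have hnk : (0 : ℝ) < (n : ℝ) - k := by
          have : (k : ℝ) < n := by exact_mod_cast hn
          linarith
        rw [Nat.cast_sub hkn, Real.div_rpow hn0 hnk.le]
        have hne : ((n : ℝ) - k) ^ a ≠ 0 := (Real.rpow_pos_of_pos hnk a).ne'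
        field_simp
      have h6 := h5.const_mul (p k)
      apply h6.congr'
      filter_upwards [hm2.eventually_ge_atTop (k + 1)] with n hn
      simp [F, if_pos (by omega : k < m n)]
    · filter_upwards [] with n
      intro k
      by_cases hk : k < m n
      · have h2k : 2 * k ≤ n := hm1 n k hk
        have hkn : k ≤ n := by omega
        simp only [F, if_pos hk]
        rw [norm_mul, Real.norm_eq_abs, Real.norm_eq_abs, abs_of_nonneg (hp0 k)]
        apply mul_le_mul_of_nonneg_left _ (hp0 k)
        have hbound : |(n : ℝ) ^ a * q (n - k)| ≤ 2 ^ a * M := by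
          rw [abs_mul, abs_of_nonneg (Real.rpow_nonneg (Nat.cast_nonneg n) a)]
          have hle : (n : ℝ) ≤ 2 * ((n - k : ℕ) : ℝ) := by
            have : (n : ℕ) ≤ 2 * (n - k) := by omega
            exact_mod_cast this
          have hna : (n : ℝ) ^ a ≤ (2 * ((n - k : ℕ) : ℝ)) ^ a :=
            Real.rpow_le_rpow (Nat.cast_nonneg n) hle ha.le
          rw [Real.mul_rpow (by norm_num) (Nat.cast_nonneg _)] at hna
          calc (n : ℝ) ^ a * |q (n - k)|
              ≤ 2 ^ a * ((n - k : ℕ) : ℝ) ^ a * |q (n - k)| :=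
                mul_le_mul_of_nonneg_right hna (abs_nonneg _)
            _ = 2 ^ a * (((n - k : ℕ) : ℝ) ^ a * |q (n - k)|) := by ring
            _ ≤ 2 ^ a * M := by
                apply mul_le_mul_of_nonneg_left _ (Real.rpow_nonneg (by norm_num) a)
                have := hM (n - k)
                rwa [abs_mul, abs_of_nonneg (Real.rpow_nonneg (Nat.cast_nonneg _) a)] at this
        exact hbound
      · simp only [F, if_neg hk, norm_zero]
        exact mul_nonneg (hp0 k) (mul_nonneg (Real.rpow_nonneg (by norm_num) a) hM0)
  have : (∑' k, p k * C) = C * ∑' k, p k := by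
    rw [tsum_mul_right, mul_comm]
  rw [this] at key
  apply key.congr
  exact fun n => hFs n

theorem convolution_tail_asymptotics
    {Ω : Type*} [MeasureSpace Ω] [IsProbabilityMeasure (ℙ : Measure Ω)]
    (X Y : Ω → ℕ) (hX : Measurable X) (hY : Measurable Y)
    (hindep : IndepFun X Y ℙ)
    (a : ℝ) (ha : 1 < a) (CX CY : ℝ) (hCX : 0 < CX) (hCY : 0 < CY)
    (hXtail : Tendsto (fun n : ℕ => (n : ℝ) ^ a * (ℙ {ω | X ω = n}).toReal) atTop (nhds CX))
    (hYtail : Tendsto (fun n : ℕ => (n : ℝ) ^ a * (ℙ {ω | Y ω = n}).toReal) atTop (nhds CY)) :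
    Tendsto (fun n : ℕ => (n : ℝ) ^ a * (ℙ {ω | X ω + Y ω = n}).toReal) atTop
      (nhds (CX + CY)) := by
  have ha0 : (0 : ℝ) < a := lt_trans one_pos ha
  set p : ℕ → ℝ := fun k => (ℙ {ω | X ω = k}).toReal with hp_def
  set q : ℕ → ℝ := fun k => (ℙ {ω | Y ω = k}).toReal with hq_def
  have hp0 : ∀ k, 0 ≤ p k := fun k => ENNReal.toReal_nonneg
  have hq0 : ∀ k, 0 ≤ q k := fun k => ENNReal.toReal_nonneg
  -- total mass 1
  have htotal : ∀ (Z : Ω → ℕ), Measurable Z →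
      Summable (fun k => (ℙ {ω | Z ω = k}).toReal) ∧
      (∑' k, (ℙ {ω | Z ω = k}).toReal) = 1 := by
    intro Z hZ
    have hmeas : ∀ k : ℕ, MeasurableSet {ω | Z ω = k} := fun k =>
      hZ (measurableSet_singleton k)
    have hdisj : Pairwise (Function.onFun Disjoint fun k : ℕ => {ω | Z ω = k}) := by
      intro i j hij
      simp only [Function.onFun, Set.disjoint_left]
      rintro ω (hi : Z ω = i) (hj : Z ω = j)
      exact hij (hi ▸ hj ▸ rfl)
    have hU : (∑' k : ℕ, ℙ {ω | Z ω = k}) = 1 := by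
      rw [← measure_iUnion hdisj hmeas]
      have : (⋃ k : ℕ, {ω | Z ω = k}) = Set.univ :=
        Set.eq_univ_of_forall fun ω => Set.mem_iUnion.mpr ⟨Z ω, rfl⟩
      rw [this, measure_univ]
    constructor
    · exact ENNReal.summable_toReal (by rw [hU]; exact ENNReal.one_ne_top)
    · rw [← ENNReal.tsum_toReal_eq (fun k => measure_ne_top _ _), hU, ENNReal.toReal_one]
  obtain ⟨hps, hptot⟩ := htotal X hX
  obtain ⟨hqs, hqtot⟩ := htotal Y hY
  -- convolution identity
  have hconv : ∀ n : ℕ, (ℙ {ω | X ω + Y ω = n}).toReal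
      = ∑ k ∈ Finset.range (n + 1), p k * q (n - k) := by
    intro n
    have hset : {ω | X ω + Y ω = n}
        = ⋃ k ∈ Finset.range (n + 1), ({ω | X ω = k} ∩ {ω | Y ω = n - k}) := by
      ext ω
      simp only [Set.mem_setOf_eq, Set.mem_iUnion, Set.mem_inter_iff, Finset.mem_range]
      constructor
      · intro h
        exact ⟨X ω, by omega, rfl, by omega⟩
      · rintro ⟨k, hk, h1, h2⟩
        omega
    have hmeas : ∀ k ∈ Finset.range (n + 1),
        MeasurableSet ({ω | X ω = k} ∩ {ω | Y ω = n - k}) := fun k _ =>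
      (hX (measurableSet_singleton k)).inter (hY (measurableSet_singleton (n - k)))
    have hdisj : (Finset.range (n + 1) : Set ℕ).Pairwise
        (Function.onFun Disjoint fun k => {ω | X ω = k} ∩ {ω | Y ω = n - k}) := by
      intro i _ j _ hij
      simp only [Function.onFun, Set.disjoint_left]
      rintro ω ⟨(hi : X ω = i), -⟩ ⟨(hj : X ω = j), -⟩
      exact hij (hi ▸ hj ▸ rfl)
    rw [hset, measure_biUnion_finset hdisj hmeas]
    rw [ENNReal.toReal_sum (fun k _ => measure_ne_top _ _)]
    apply Finset.sum_congr rfl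
    intro k _
    have := hindep.measure_inter_preimage_eq_mul {k} {n - k}
      (measurableSet_singleton k) (measurableSet_singleton (n - k))
    have heq : ({ω | X ω = k} ∩ {ω | Y ω = n - k})
        = X ⁻¹' {k} ∩ Y ⁻¹' {n - k} := rfl
    rw [heq, this, ENNReal.toReal_mul]
    rfl
  -- splitting identity
  have hsplit : ∀ n : ℕ, (n : ℝ) ^ a * (ℙ {ω | X ω + Y ω = n}).toReal
      = (∑ k ∈ Finset.range (n / 2 + 1), p k * ((n : ℝ) ^ a * q (n - k)))
        + ∑ j ∈ Finset.range (n - n / 2), q j * ((n : ℝ) ^ a * p (n - j)) := by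
    intro n
    rw [hconv n, Finset.mul_sum]
    have h1 : Finset.range (n + 1) = Finset.Ico 0 (n + 1) := by
      rw [Finset.range_eq_Ico]
    rw [h1, ← Finset.sum_Ico_consecutive _ (Nat.zero_le (n / 2 + 1)) (by omega)]
    congr 1
    · rw [← Finset.range_eq_Ico]
      exact Finset.sum_congr rfl fun k _ => by ring
    · apply Finset.sum_bij' (i := fun k _ => n - k) (j := fun j _ => n - j)
      · intro k hk
        simp only [Finset.mem_Ico] at hk
        simp only [Finset.mem_range]
        omega
      · intro j hj
        simp only [Finset.mem_range] at hj
        simp only [Finset.mem_Ico]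
        omega
      · intro k hk
        simp only [Finset.mem_Ico] at hk
        omega
      · intro j hj
        simp only [Finset.mem_range] at hj
        omega
      · intro k hk
        simp only [Finset.mem_Ico] at hk
        have : n - (n - k) = k := by omega
        rw [this]
        ring
  -- the two limits
  have hm2a : Tendsto (fun n : ℕ => n / 2 + 1) atTop atTop :=
    tendsto_atTop_atTop.2 fun b => ⟨2 * b, fun n hn => by omega⟩
  have hm2b : Tendsto (fun n : ℕ => n - n / 2) atTop atTop :=
    tendsto_atTop_atTop.2 fun b => ⟨2 * b + 2, fun n hn => by omega⟩
  have T1 := aux_tendsto a ha0 p q hp0 hps CY hYtail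
    (fun n => n / 2 + 1) (fun n k hk => by change k < n / 2 + 1 at hk; omega) hm2a
  have T2 := aux_tendsto a ha0 q p hq0 hqs CX hXtail
    (fun n => n - n / 2) (fun n k hk => by change k < n - n / 2 at hk; omega) hm2b
  rw [hptot, mul_one] at T1
  rw [hqtot, mul_one] at T2
  have := T1.add T2
  rw [show CY + CX = CX + CY by ring] at this
  apply this.congr
  intro n
  exact (hsplit n).symm
end

section
/- Let a > 1, X, Y be independent nonnegative-integer-valued random variables with n^a·P(X=n) → C_X and n^a·P(Y=n) → C_Y. Then liminf_{n→∞} n^a · P(X + Y = n) ≥ C_X + C_Y. -/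
open MeasureTheory ProbabilityTheory Filter


lemma ratio_rpow_tendsto_one (a : ℝ) (k : ℕ) :
    Tendsto (fun n : ℕ => (n : ℝ) ^ a / ((n - k : ℕ) : ℝ) ^ a) atTop (nhds 1) := by
  have hfrac : Tendsto (fun n : ℕ => (n : ℝ) / ((n : ℝ) - k)) atTop (nhds 1) := by
    have hinv : Tendsto (fun n : ℕ => (n : ℝ)⁻¹) atTop (nhds 0) :=
      tendsto_inv_atTop_nhds_zero_nat
    have hden : Tendsto (fun n : ℕ => 1 - (k : ℝ) * (n : ℝ)⁻¹) atTop (nhds 1) := by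
      have := (tendsto_const_nhds (x := (k : ℝ)) (f := atTop)).mul hinv
      simpa using (tendsto_const_nhds (x := (1 : ℝ)) (f := atTop)).sub this
    have h1 : Tendsto (fun n : ℕ => (1 : ℝ) / (1 - (k : ℝ) * (n : ℝ)⁻¹)) atTop (nhds 1) := by
      simpa [Pi.div_def] using (tendsto_const_nhds (x := (1:ℝ))).div hden one_ne_zero
    refine h1.congr' ?_
    filter_upwards [eventually_ge_atTop (k + 1)] with n hn
    have hn0 : (0 : ℝ) < n := by
      have : (0:ℕ) < n := by omega
      exact_mod_cast this
    have hnk : (0 : ℝ) < (n : ℝ) - k := by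
      have : (k:ℝ) + 1 ≤ n := by exact_mod_cast hn
      linarith
    field_simp
  have hcont : Tendsto (fun x : ℝ => x ^ a) (nhds 1) (nhds 1) := by
    have := (Real.continuousAt_rpow_const 1 a (Or.inl one_ne_zero)).tendsto
    simpa [Real.one_rpow] using this
  have := hcont.comp hfrac
  refine this.congr' ?_
  filter_upwards [eventually_ge_atTop (k + 1)] with n hn
  have hn0 : (0 : ℝ) ≤ n := by positivity
  have hksub : ((n - k : ℕ) : ℝ) = (n : ℝ) - k := by
    have : k ≤ n := by omega
    push_cast [this]; ring
  have hnk : (0 : ℝ) ≤ (n : ℝ) - k := by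
    have : (k:ℝ) + 1 ≤ n := by exact_mod_cast hn
    linarith
  simp only [Function.comp]
  rw [hksub, Real.div_rpow hn0 hnk]

lemma shifted_tail (a : ℝ) (p : ℕ → ℝ) (C : ℝ)
    (h : Tendsto (fun n : ℕ => (n : ℝ) ^ a * p n) atTop (nhds C)) (k : ℕ) :
    Tendsto (fun n : ℕ => (n : ℝ) ^ a * p (n - k)) atTop (nhds C) := by
  have h1 : Tendsto (fun n : ℕ => ((n - k : ℕ) : ℝ) ^ a * p (n - k)) atTop (nhds C) :=
    h.comp (tendsto_sub_atTop_nat k)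
  have h2 := (ratio_rpow_tendsto_one a k).mul h1
  rw [one_mul] at h2
  refine h2.congr' ?_
  filter_upwards [eventually_ge_atTop (k + 1)] with n hn
  have hnk : (0 : ℝ) < ((n - k : ℕ) : ℝ) := by
    have : 0 < n - k := by omega
    exact_mod_cast this
  have : ((n - k : ℕ) : ℝ) ^ a ≠ 0 := (Real.rpow_pos_of_pos hnk a).ne'
  field_simp

lemma conv_lower_bound
    {Ω : Type*} [MeasureSpace Ω] [IsProbabilityMeasure (ℙ : Measure Ω)]
    (X Y : Ω → ℕ) (hX : Measurable X) (hY : Measurable Y)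
    (hindep : IndepFun X Y ℙ) (K n : ℕ) (hn : 2 * K + 1 ≤ n) :
    ∑ k ∈ Finset.range (K + 1),
      ((ℙ {ω | X ω = n - k}).toReal * (ℙ {ω | Y ω = k}).toReal
        + (ℙ {ω | X ω = k}).toReal * (ℙ {ω | Y ω = n - k}).toReal)
      ≤ (ℙ {ω | X ω + Y ω = n}).toReal := by
  set S : ℕ → ℕ → Set Ω := fun i j => {ω | X ω = i} ∩ {ω | Y ω = j} with hS
  have hmeas : ∀ i j, MeasurableSet (S i j) := fun i j =>
    (hX (measurableSet_singleton i)).inter (hY (measurableSet_singleton j))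
  have hdisj : ∀ i j i' j' : ℕ, (i ≠ i' ∨ j ≠ j') → Disjoint (S i j) (S i' j') := by
    intro i j i' j' h
    rw [Set.disjoint_left]
    rintro ω ⟨(hx : X ω = i), (hy : Y ω = j)⟩ ⟨(hx' : X ω = i'), (hy' : Y ω = j')⟩
    rcases h with h | h
    · exact h (hx ▸ hx' ▸ rfl)
    · exact h (hy ▸ hy' ▸ rfl)
  have hSP : ∀ i j, ℙ (S i j) = ℙ {ω | X ω = i} * ℙ {ω | Y ω = j} := by
    intro i j
    exact hindep.measure_inter_preimage_eq_mul {i} {j} (measurableSet_singleton i)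
      (measurableSet_singleton j)
  set D : ℕ → Set Ω := fun k => S (n - k) k ∪ S k (n - k) with hD
  -- for k ≤ K : k < n - k
  have hlt : ∀ k ≤ K, k < n - k := by intro k hk; omega
  have hDmeas : ∀ k, MeasurableSet (D k) := fun k => (hmeas _ _).union (hmeas _ _)
  have hDP : ∀ k ≤ K, ℙ (D k) = ℙ (S (n - k) k) + ℙ (S k (n - k)) := by
    intro k hk
    exact measure_union (hdisj _ _ _ _ (Or.inl (by have := hlt k hk; omega))) (hmeas _ _)
  have hDdisj : (↑(Finset.range (K + 1)) : Set ℕ).PairwiseDisjoint D := by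
    intro i hi j hj hij
    simp only [Finset.coe_range, Set.mem_Iio] at hi hj
    have hiK : i ≤ K := by omega
    have hjK : j ≤ K := by omega
    have h1 := hlt i hiK
    have h2 := hlt j hjK
    refine Set.disjoint_union_left.2 ⟨?_, ?_⟩ <;>
      refine Set.disjoint_union_right.2 ⟨?_, ?_⟩
    · exact hdisj _ _ _ _ (Or.inr hij)
    · exact hdisj _ _ _ _ (Or.inl (by omega))
    · exact hdisj _ _ _ _ (Or.inl (by omega))
    · exact hdisj _ _ _ _ (Or.inl hij)
  have hsub : (⋃ k ∈ Finset.range (K + 1), D k) ⊆ {ω | X ω + Y ω = n} := by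
    intro ω hω
    simp only [Set.mem_iUnion, Finset.mem_range] at hω
    obtain ⟨k, hk, hωk⟩ := hω
    have hkn : k ≤ n := by omega
    rcases hωk with ⟨(hx : X ω = n - k), (hy : Y ω = k)⟩ | ⟨(hx : X ω = k), (hy : Y ω = n - k)⟩
    · show X ω + Y ω = n; rw [hx, hy]; omega
    · show X ω + Y ω = n; rw [hx, hy]; omega
  have hEkey : ∑ k ∈ Finset.range (K + 1),
      (ℙ {ω | X ω = n - k} * ℙ {ω | Y ω = k} + ℙ {ω | X ω = k} * ℙ {ω | Y ω = n - k})
      ≤ ℙ {ω | X ω + Y ω = n} := by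
    calc ∑ k ∈ Finset.range (K + 1),
        (ℙ {ω | X ω = n - k} * ℙ {ω | Y ω = k} + ℙ {ω | X ω = k} * ℙ {ω | Y ω = n - k})
        = ∑ k ∈ Finset.range (K + 1), ℙ (D k) := by
          refine Finset.sum_congr rfl fun k hk => ?_
          rw [hDP k (by simpa [Nat.lt_succ_iff] using hk), hSP, hSP]
      _ = ℙ (⋃ k ∈ Finset.range (K + 1), D k) :=
          (measure_biUnion_finset hDdisj fun k _ => hDmeas k).symm
      _ ≤ ℙ {ω | X ω + Y ω = n} := measure_mono hsub
  have := ENNReal.toReal_mono (measure_ne_top ℙ _) hEkey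
  rw [ENNReal.toReal_sum (fun k _ => by
    exact ENNReal.add_ne_top.2 ⟨ENNReal.mul_ne_top (measure_ne_top ℙ _) (measure_ne_top ℙ _),
      ENNReal.mul_ne_top (measure_ne_top ℙ _) (measure_ne_top ℙ _)⟩)] at this
  simp only [ENNReal.toReal_add (ENNReal.mul_ne_top (measure_ne_top ℙ _) (measure_ne_top ℙ _))
      (ENNReal.mul_ne_top (measure_ne_top ℙ _) (measure_ne_top ℙ _)),
    ENNReal.toReal_mul] at this
  exact this

lemma pmf_hasSum_one
    {Ω : Type*} [MeasureSpace Ω] [IsProbabilityMeasure (ℙ : Measure Ω)]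
    (X : Ω → ℕ) (hX : Measurable X) :
    HasSum (fun k : ℕ => (ℙ {ω | X ω = k}).toReal) 1 := by
  have hmeas : ∀ k : ℕ, MeasurableSet {ω | X ω = k} := fun k =>
    hX (measurableSet_singleton k)
  have hdisj : Pairwise (Function.onFun Disjoint (fun k => {ω | X ω = k})) := by
    intro i j hij
    rw [Function.onFun, Set.disjoint_left]
    rintro ω (hi : X ω = i) (hj : X ω = j)
    exact hij (hi ▸ hj ▸ rfl)
  have hsum : (∑' k : ℕ, ℙ {ω | X ω = k}) = 1 := by
    rw [← measure_iUnion hdisj hmeas]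
    have : (⋃ k : ℕ, {ω | X ω = k}) = Set.univ := by ext ω; simp
    rw [this, measure_univ]
  have hne : (∑' k : ℕ, ℙ {ω | X ω = k}) ≠ ⊤ := by rw [hsum]; exact ENNReal.one_ne_top
  have h2 := ENNReal.hasSum_toReal hne
  rwa [← ENNReal.tsum_toReal_eq (fun k => measure_ne_top ℙ _), hsum, ENNReal.toReal_one] at h2

lemma conv_pmf_eq
    {Ω : Type*} [MeasureSpace Ω] [IsProbabilityMeasure (ℙ : Measure Ω)]
    (X Y : Ω → ℕ) (hX : Measurable X) (hY : Measurable Y)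
    (hindep : IndepFun X Y ℙ) (n : ℕ) :
    (ℙ {ω | X ω + Y ω = n}).toReal
      = ∑ k ∈ Finset.range (n + 1), (ℙ {ω | X ω = k}).toReal * (ℙ {ω | Y ω = n - k}).toReal := by
  set S : ℕ → Set Ω := fun k => {ω | X ω = k} ∩ {ω | Y ω = n - k} with hS
  have hmeas : ∀ k, MeasurableSet (S k) := fun k =>
    (hX (measurableSet_singleton k)).inter (hY (measurableSet_singleton (n - k)))
  have hSP : ∀ k, ℙ (S k) = ℙ {ω | X ω = k} * ℙ {ω | Y ω = n - k} := fun k =>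
    hindep.measure_inter_preimage_eq_mul {k} {n - k} (measurableSet_singleton k)
      (measurableSet_singleton (n - k))
  have hdisj : (↑(Finset.range (n + 1)) : Set ℕ).PairwiseDisjoint S := by
    intro i _ j _ hij
    rw [Function.onFun, Set.disjoint_left]
    rintro ω ⟨(hx : X ω = i), _⟩ ⟨(hx' : X ω = j), _⟩
    exact hij (hx ▸ hx' ▸ rfl)
  have hset : {ω | X ω + Y ω = n} = ⋃ k ∈ Finset.range (n + 1), S k := by
    ext ω
    simp only [Set.mem_setOf_eq, Set.mem_iUnion, Finset.mem_range]
    constructor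
    · intro h
      exact ⟨X ω, by omega, rfl, by show Y ω = n - X ω; omega⟩
    · rintro ⟨k, hk, (hx : X ω = k), (hy : Y ω = n - k)⟩
      omega
  rw [hset, measure_biUnion_finset hdisj fun k _ => hmeas k,
    ENNReal.toReal_sum (fun k _ => measure_ne_top ℙ _)]
  exact Finset.sum_congr rfl fun k _ => by rw [hSP, ENNReal.toReal_mul]

lemma conv_upper_bound
    {Ω : Type*} [MeasureSpace Ω] [IsProbabilityMeasure (ℙ : Measure Ω)]
    (X Y : Ω → ℕ) (hX : Measurable X) (hY : Measurable Y)
    (hindep : IndepFun X Y ℙ)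
    (a : ℝ) (ha : 1 < a) (CX CY : ℝ)
    (hXtail : Tendsto (fun n : ℕ => (n : ℝ) ^ a * (ℙ {ω | X ω = n}).toReal) atTop (nhds CX))
    (hYtail : Tendsto (fun n : ℕ => (n : ℝ) ^ a * (ℙ {ω | Y ω = n}).toReal) atTop (nhds CY)) :
    IsBoundedUnder (· ≤ ·) atTop
      (fun n : ℕ => (n : ℝ) ^ a * (ℙ {ω | X ω + Y ω = n}).toReal) := by
  have ha0 : (0 : ℝ) ≤ a := by linarith
  set p : ℕ → ℝ := fun k => (ℙ {ω | X ω = k}).toReal with hp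
  set q : ℕ → ℝ := fun k => (ℙ {ω | Y ω = k}).toReal with hq
  obtain ⟨N1, hN1⟩ := (hXtail.eventually_le_const (lt_add_one CX)).exists_forall_of_atTop
  obtain ⟨N2, hN2⟩ := (hYtail.eventually_le_const (lt_add_one CY)).exists_forall_of_atTop
  set N : ℕ := max (max N1 N2) 1 with hN
  set M : ℝ := 2 ^ a * ((CX + 1) + (CY + 1)) with hM
  refine ⟨M, ?_⟩
  rw [eventually_map]
  filter_upwards [eventually_ge_atTop (2 * N)] with n hn
  have hn1 : 1 ≤ n := by omega
  have hnot : (0 : ℝ) < (n : ℝ) ^ a := Real.rpow_pos_of_pos (by exact_mod_cast hn1) a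
  -- pointwise bounds
  have hCX1 : (0:ℝ) ≤ CX + 1 := by
    have := hN1 N1 le_rfl
    have h0 : (0:ℝ) ≤ (N1 : ℝ) ^ a * p N1 :=
      mul_nonneg (Real.rpow_nonneg (Nat.cast_nonneg N1) a) ENNReal.toReal_nonneg
    linarith
  have hCY1 : (0:ℝ) ≤ CY + 1 := by
    have := hN2 N2 le_rfl
    have h0 : (0:ℝ) ≤ (N2 : ℝ) ^ a * q N2 :=
      mul_nonneg (Real.rpow_nonneg (Nat.cast_nonneg N2) a) ENNReal.toReal_nonneg
    linarith
  have hpb : ∀ k : ℕ, 2 * k ≥ n → p k ≤ (CX + 1) * 2 ^ a / (n : ℝ) ^ a := by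
    intro k hk
    have hkN1 : N1 ≤ k := by omega
    have hk1 : 1 ≤ k := by omega
    have hkpos : (0 : ℝ) < (k : ℝ) ^ a := Real.rpow_pos_of_pos (by exact_mod_cast hk1) a
    have h1 : p k ≤ (CX + 1) / (k : ℝ) ^ a := by
      rw [le_div_iff₀ hkpos]
      have := hN1 k hkN1
      linarith [this]
    refine h1.trans ?_
    rw [div_le_div_iff₀ hkpos hnot]
    have hk2 : (n : ℝ) ≤ 2 * k := by exact_mod_cast hk
    have h2 : (n : ℝ) ^ a ≤ ((2 : ℝ) * k) ^ a :=
      Real.rpow_le_rpow (by positivity) hk2 ha0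
    have h3 : ((2 : ℝ) * k) ^ a = 2 ^ a * (k : ℝ) ^ a :=
      Real.mul_rpow (by norm_num) (by positivity)
    calc (CX + 1) * (n : ℝ) ^ a ≤ (CX + 1) * (2 ^ a * (k : ℝ) ^ a) :=
          mul_le_mul_of_nonneg_left (h3 ▸ h2) hCX1
      _ = (CX + 1) * 2 ^ a * (k : ℝ) ^ a := by ring
  have hqb : ∀ k : ℕ, 2 * k ≥ n → q k ≤ (CY + 1) * 2 ^ a / (n : ℝ) ^ a := by
    intro k hk
    have hkN2 : N2 ≤ k := by omega
    have hk1 : 1 ≤ k := by omega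
    have hkpos : (0 : ℝ) < (k : ℝ) ^ a := Real.rpow_pos_of_pos (by exact_mod_cast hk1) a
    have h1 : q k ≤ (CY + 1) / (k : ℝ) ^ a := by
      rw [le_div_iff₀ hkpos]
      have := hN2 k hkN2
      linarith [this]
    refine h1.trans ?_
    rw [div_le_div_iff₀ hkpos hnot]
    have hk2 : (n : ℝ) ≤ 2 * k := by exact_mod_cast hk
    have h2 : (n : ℝ) ^ a ≤ ((2 : ℝ) * k) ^ a :=
      Real.rpow_le_rpow (by positivity) hk2 ha0
    have h3 : ((2 : ℝ) * k) ^ a = 2 ^ a * (k : ℝ) ^ a :=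
      Real.mul_rpow (by norm_num) (by positivity)
    calc (CY + 1) * (n : ℝ) ^ a ≤ (CY + 1) * (2 ^ a * (k : ℝ) ^ a) :=
          mul_le_mul_of_nonneg_left (h3 ▸ h2) hCY1
      _ = (CY + 1) * 2 ^ a * (k : ℝ) ^ a := by ring
  have hterm : ∀ k ∈ Finset.range (n + 1), p k * q (n - k)
      ≤ (CX + 1) * 2 ^ a / (n : ℝ) ^ a * q (n - k)
        + p k * ((CY + 1) * 2 ^ a / (n : ℝ) ^ a) := by
    intro k hk
    have hq0 : 0 ≤ q (n - k) := ENNReal.toReal_nonneg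
    have hp0 : 0 ≤ p k := ENNReal.toReal_nonneg
    rcases le_or_gt n (2 * k) with hcase | hcase
    · have := mul_le_mul_of_nonneg_right (hpb k hcase) hq0
      have h0 : 0 ≤ p k * ((CY + 1) * 2 ^ a / (n : ℝ) ^ a) := by positivity
      linarith
    · have h2 : 2 * (n - k) ≥ n := by omega
      have := mul_le_mul_of_nonneg_left (hqb (n - k) h2) hp0
      have h0 : 0 ≤ (CX + 1) * 2 ^ a / (n : ℝ) ^ a * q (n - k) := by positivity
      linarith
  have hsump : ∑ k ∈ Finset.range (n + 1), p k ≤ 1 :=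
    sum_le_hasSum _ (fun k _ => ENNReal.toReal_nonneg) (pmf_hasSum_one X hX)
  have hsumq : ∑ k ∈ Finset.range (n + 1), q (n - k) ≤ 1 := by
    have hrefl : ∑ k ∈ Finset.range (n + 1), q (n - k)
        = ∑ k ∈ Finset.range (n + 1), q k := by
      have := Finset.sum_range_reflect q (n + 1)
      simpa using this
    rw [hrefl]
    exact sum_le_hasSum _ (fun k _ => ENNReal.toReal_nonneg) (pmf_hasSum_one Y hY)
  have hr : (ℙ {ω | X ω + Y ω = n}).toReal
      ≤ (CX + 1) * 2 ^ a / (n : ℝ) ^ a + (CY + 1) * 2 ^ a / (n : ℝ) ^ a := by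
    rw [conv_pmf_eq X Y hX hY hindep n]
    calc ∑ k ∈ Finset.range (n + 1), p k * q (n - k)
        ≤ ∑ k ∈ Finset.range (n + 1), ((CX + 1) * 2 ^ a / (n : ℝ) ^ a * q (n - k)
            + p k * ((CY + 1) * 2 ^ a / (n : ℝ) ^ a)) := Finset.sum_le_sum hterm
      _ = (CX + 1) * 2 ^ a / (n : ℝ) ^ a * (∑ k ∈ Finset.range (n + 1), q (n - k))
            + (∑ k ∈ Finset.range (n + 1), p k) * ((CY + 1) * 2 ^ a / (n : ℝ) ^ a) := by
          rw [Finset.sum_add_distrib, ← Finset.mul_sum, ← Finset.sum_mul]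
      _ ≤ (CX + 1) * 2 ^ a / (n : ℝ) ^ a * 1 + 1 * ((CY + 1) * 2 ^ a / (n : ℝ) ^ a) := by
          have h1 : 0 ≤ (CX + 1) * 2 ^ a / (n : ℝ) ^ a := by positivity
          have h2 : 0 ≤ (CY + 1) * 2 ^ a / (n : ℝ) ^ a := by positivity
          have h3 : 0 ≤ ∑ k ∈ Finset.range (n + 1), p k :=
            Finset.sum_nonneg fun k _ => ENNReal.toReal_nonneg
          gcongr
      _ = (CX + 1) * 2 ^ a / (n : ℝ) ^ a + (CY + 1) * 2 ^ a / (n : ℝ) ^ a := by ring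
  calc (n : ℝ) ^ a * (ℙ {ω | X ω + Y ω = n}).toReal
      ≤ (n : ℝ) ^ a * ((CX + 1) * 2 ^ a / (n : ℝ) ^ a + (CY + 1) * 2 ^ a / (n : ℝ) ^ a) :=
        mul_le_mul_of_nonneg_left hr hnot.le
    _ = M := by field_simp [hM]; ring

lemma pmf_partial_sums_tendsto_one
    {Ω : Type*} [MeasureSpace Ω] [IsProbabilityMeasure (ℙ : Measure Ω)]
    (X : Ω → ℕ) (hX : Measurable X) :
    Tendsto (fun K : ℕ => ∑ k ∈ Finset.range (K + 1), (ℙ {ω | X ω = k}).toReal)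
      atTop (nhds 1) :=
  (pmf_hasSum_one X hX).tendsto_sum_nat.comp (tendsto_add_atTop_nat 1)

theorem convolution_tail_liminf
    {Ω : Type*} [MeasureSpace Ω] [IsProbabilityMeasure (ℙ : Measure Ω)]
    (X Y : Ω → ℕ) (hX : Measurable X) (hY : Measurable Y)
    (hindep : IndepFun X Y ℙ)
    (a : ℝ) (ha : 1 < a) (CX CY : ℝ) (hCX : 0 < CX) (hCY : 0 < CY)
    (hXtail : Tendsto (fun n : ℕ => (n : ℝ) ^ a * (ℙ {ω | X ω = n}).toReal) atTop (nhds CX))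
    (hYtail : Tendsto (fun n : ℕ => (n : ℝ) ^ a * (ℙ {ω | Y ω = n}).toReal) atTop (nhds CY)) :
    CX + CY ≤ atTop.liminf (fun n : ℕ => (n : ℝ) ^ a * (ℙ {ω | X ω + Y ω = n}).toReal) := by
  classical
  set p : ℕ → ℝ := fun k => (ℙ {ω | X ω = k}).toReal with hp
  set q : ℕ → ℝ := fun k => (ℙ {ω | Y ω = k}).toReal with hq
  set f : ℕ → ℝ := fun n => (n : ℝ) ^ a * (ℙ {ω | X ω + Y ω = n}).toReal with hf
  have hcob : IsCoboundedUnder (· ≥ ·) atTop f :=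
    (conv_upper_bound X Y hX hY hindep a ha CX CY hXtail hYtail).isCoboundedUnder_ge
  have hK : ∀ K : ℕ, CX * (∑ k ∈ Finset.range (K + 1), q k)
      + CY * (∑ k ∈ Finset.range (K + 1), p k) ≤ atTop.liminf f := by
    intro K
    set g : ℕ → ℝ := fun n => ∑ k ∈ Finset.range (K + 1),
      ((n : ℝ) ^ a * p (n - k) * q k + p k * ((n : ℝ) ^ a * q (n - k))) with hg
    have hgt : Tendsto g atTop
        (nhds (∑ k ∈ Finset.range (K + 1), (CX * q k + p k * CY))) := by
      refine tendsto_finset_sum _ fun k _ => ?_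
      exact ((shifted_tail a p CX hXtail k).mul tendsto_const_nhds).add
        (tendsto_const_nhds.mul (shifted_tail a q CY hYtail k))
    have hsum_eq : (∑ k ∈ Finset.range (K + 1), (CX * q k + p k * CY))
        = CX * (∑ k ∈ Finset.range (K + 1), q k)
          + CY * (∑ k ∈ Finset.range (K + 1), p k) := by
      rw [Finset.sum_add_distrib, ← Finset.mul_sum, ← Finset.sum_mul]
      ring
    have hle : ∀ᶠ n in atTop, g n ≤ f n := by
      filter_upwards [eventually_ge_atTop (2 * K + 1)] with n hn
      have hcore := conv_lower_bound X Y hX hY hindep K n hn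
      have hna : (0 : ℝ) ≤ (n : ℝ) ^ a := Real.rpow_nonneg n.cast_nonneg a
      calc g n = (n : ℝ) ^ a * ∑ k ∈ Finset.range (K + 1),
            (p (n - k) * q k + p k * q (n - k)) := by
            rw [Finset.mul_sum]
            exact Finset.sum_congr rfl fun k _ => by ring
        _ ≤ (n : ℝ) ^ a * (ℙ {ω | X ω + Y ω = n}).toReal :=
            mul_le_mul_of_nonneg_left hcore hna
    have h1 : atTop.liminf g ≤ atTop.liminf f :=
      liminf_le_liminf hle hgt.isBoundedUnder_ge hcob
    rw [hgt.liminf_eq, hsum_eq] at h1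
    exact h1
  have hS : Tendsto (fun K : ℕ => CX * (∑ k ∈ Finset.range (K + 1), q k)
      + CY * (∑ k ∈ Finset.range (K + 1), p k)) atTop (nhds (CX * 1 + CY * 1)) :=
    (tendsto_const_nhds.mul (pmf_partial_sums_tendsto_one Y hY)).add
      (tendsto_const_nhds.mul (pmf_partial_sums_tendsto_one X hX))
  have := le_of_tendsto hS (Filter.Eventually.of_forall hK)
  simpa using this
end
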